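/- (Theorem 1, case i_1 = 1 and i_m = n + m.) Assume no two ghost positions are consecutive, i.e. ι k + 1 < ι (k+1) for all k with k + 1 ≤ m − 1, and assume ι 0 = 1 and ι (m−1) = n + m. Then for every v : ℝ and every w : ℕ → ℝ there exists a multivariate polynomial p : MvPolynomial (Fin (n+m)) ℝ with total degree at most 2*m − 2 such that for every choice of input bits b : ℕ → ℤ with b k ∈ {0,1} for all k and every c implementing the m-plus-bits interface for b, one has v + ∑_{i=1}^{n} w i * (φ* i : ℝ) = MvPolynomial.eval (fun t : Fin (n+m) => ((φ (t + 1)) : ℝ)) p. -/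

import Mathlib

/-!
Write `s q = 2 b q - 1` and `Φ t = ∏_{q = t}^{n+m} s q`, so that the observable features are the `Φ t`.
Through the interface, the hidden feature `φ* i` is the product of `s q` over the non-ghost
positions `q ≥ p`, for any position `p` with `p - #{ghosts < p} = i`. Since `s q ^ 2 = 1`, this is
`Φ p` times the product of `s g` over the ghosts `g ≥ p`, and `s g = Φ g * Φ (g + 1)` except for the
last ghost, where `s (n + m) = Φ (n + m)`. As `ι 0 = 1 < p`, at most `m - 2` ghosts contribute two
factors, so each hidden feature is a monomial of degree at most `2 + 2 (m - 2)` in the `Φ t`.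
-/

/-- `c` implements the `m`-plus-bits challenge interface for input bits `b`,
with ghost-bit positions `ι 0 < ι 1 < ... < ι (m-1)`, for an `n`-stage PUF. -/
def MPlusBitsInterface (n m : ℕ) (hm : 1 ≤ m) (ι : Fin m → ℕ)
    (b c : ℕ → ℤ) : Prop :=
  (∀ i, 1 ≤ i → i < ι ⟨0, hm⟩ → c i = b i) ∧
  (∀ k (hk : k + 1 ≤ m - 1), ∀ i,
    ι ⟨k, by omega⟩ < i → i < ι ⟨k + 1, by omega⟩ → c (i - (k + 1)) = b i) ∧
  (∀ i, ι ⟨m - 1, by omega⟩ < i → i ≤ n + m → c (i - m) = b i)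

open Finset

theorem StrictMono.apply_add_le_apply {m : ℕ} {ι : Fin m → ℕ} (hι : StrictMono ι) {i j : Fin m}
    (hij : i ≤ j) :
    ι i + (j - i : ℕ) ≤ ι j := by
  have := card_le_card_of_injOn ι (s := Icc i j) (t := Icc (ι i) (ι j))
    (fun k hk => by
      simp only [coe_Icc, Set.mem_Icc] at hk ⊢
      exact ⟨hι.monotone hk.1, hι.monotone hk.2⟩)
    hι.injective.injOn
  rw [Fin.card_Icc, Nat.card_Icc] at this
  have := hι.monotone hij
  omega

theorem Nat.exists_mem_Icc_eq_of_le_add_one {f : ℕ → ℕ} (hf : ∀ p, f (p + 1) ≤ f p + 1)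
    {a b i : ℕ} (hab : a ≤ b) (ha : f a ≤ i) (hb : i ≤ f b) : ∃ p ∈ Icc a b, f p = i := by
  induction b, hab using Nat.le_induction with
  | base => exact ⟨a, by simp, le_antisymm ha hb⟩
  | succ b hab ih =>
    by_cases hib : i ≤ f b
    · obtain ⟨p, hp, hfp⟩ := ih hib
      exact ⟨p, by simp only [mem_Icc] at hp ⊢; omega, hfp⟩
    · exact ⟨b + 1, by simp only [mem_Icc]; omega, by have := hf b; omega⟩

theorem Finset.prod_sdiff_of_mul_self_eq_one {α M : Type*} [CommMonoid M] [DecidableEq α]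
    {f : α → M} (hf : ∀ a, f a * f a = 1) (s t : Finset α) :
    ∏ a ∈ s \ t, f a = (∏ a ∈ s, f a) * ∏ a ∈ s ∩ t, f a := by
  rw [← prod_inter_mul_prod_sdiff s t, mul_comm (∏ a ∈ s ∩ t, f a), mul_assoc,
    ← prod_mul_distrib, prod_eq_one fun a _ => hf a, mul_one]

theorem eq_prod_Icc_mul_prod_Icc_add_one {M : Type*} [CommMonoid M] {y : ℕ → M}
    (hy : ∀ q, y q * y q = 1) {q N : ℕ} (hq : q ≤ N) :
    y q = (∏ k ∈ Icc q N, y k) * ∏ k ∈ Icc (q + 1) N, y k := by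
  rw [← insert_Icc_add_one_left_eq_Icc hq, prod_insert (by simp), mul_assoc,
    ← prod_mul_distrib, prod_eq_one fun k _ => hy k, mul_one]

namespace GhostBits

section Ghosts

variable {m : ℕ} (ι : Fin m → ℕ)

def ghostsBelow (p : ℕ) : ℕ := #(univ.filter fun j => ι j < p)

theorem ghostsBelow_mono : Monotone (ghostsBelow ι) := fun _ _ hpq =>
  card_le_card (monotone_filter_right _ fun _ _ hj => hj.trans_le hpq)

variable {ι}

theorem lt_ghostsBelow_iff (hι : Monotone ι) {p : ℕ} {j : Fin m} :
    (j : ℕ) < ghostsBelow ι p ↔ ι j < p := by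
  constructor
  · intro hj
    by_contra! hpj
    have hsub : univ.filter (fun j' => ι j' < p) ⊆ Iio j := fun j' hj' => by
      simp only [mem_filter, mem_univ, true_and, mem_Iio] at hj' ⊢
      by_contra! hjj'
      exact absurd (hι hjj') (by omega)
    have := card_le_card hsub
    rw [Fin.card_Iio] at this
    exact absurd hj (by unfold ghostsBelow; omega)
  · intro hjp
    have hsub : Iic j ⊆ univ.filter (fun j' => ι j' < p) := fun j' hj' => by
      simp only [mem_filter, mem_univ, true_and, mem_Iic] at hj' ⊢
      exact (hι hj').trans_lt hjp
    have := card_le_card hsub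
    rw [Fin.card_Iic] at this
    unfold ghostsBelow
    omega

theorem ghostsBelow_apply (hι : StrictMono ι) (j : Fin m) : ghostsBelow ι (ι j) = j := by
  simp only [ghostsBelow, hι.lt_iff_lt, filter_gt_eq_Iio, Fin.card_Iio]

theorem ghostsBelow_apply_add_one (hι : StrictMono ι) (j : Fin m) :
    ghostsBelow ι (ι j + 1) = j + 1 := by
  simp only [ghostsBelow, Nat.lt_add_one_iff, hι.le_iff_le, filter_ge_eq_Iic, Fin.card_Iic]

theorem ghostsBelow_add_one_of_notMem {p : ℕ} (hp : p ∉ univ.image ι) :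
    ghostsBelow ι (p + 1) = ghostsBelow ι p := by
  unfold ghostsBelow
  congr 1
  refine filter_congr fun j _ => ?_
  have : ι j ≠ p := fun h => hp (mem_image.2 ⟨j, mem_univ _, h⟩)
  omega

theorem exists_block (hm : 1 ≤ m) (hι : StrictMono ι) {q : ℕ} (h0 : ι ⟨0, hm⟩ < q)
    (hq : q < ι ⟨m - 1, by omega⟩) (hqι : q ∉ univ.image ι) :
    ∃ k, ∃ hk : k + 1 ≤ m - 1, ghostsBelow ι q = k + 1 ∧
      ι ⟨k, by omega⟩ < q ∧ q < ι ⟨k + 1, by omega⟩ := by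
  have hpos : 0 < ghostsBelow ι q := (lt_ghostsBelow_iff hι.monotone (j := ⟨0, hm⟩)).2 h0
  have hlt : ghostsBelow ι q ≤ m - 1 := by
    by_contra! h
    exact absurd hq ((lt_ghostsBelow_iff hι.monotone (j := ⟨m - 1, by omega⟩)).1 h).not_gt
  refine ⟨ghostsBelow ι q - 1, by omega, by omega,
    (lt_ghostsBelow_iff hι.monotone).1 (by simp only; omega), ?_⟩
  have hle : q ≤ ι ⟨ghostsBelow ι q - 1 + 1, by omega⟩ :=
    not_lt.1 fun h => absurd ((lt_ghostsBelow_iff hι.monotone).2 h) (by simp only; omega)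
  exact hle.lt_of_ne fun h => hqι (mem_image.2 ⟨_, mem_univ _, h.symm⟩)

theorem prod_Icc_sub_ghostsBelow {M : Type*} [CommMonoid M] {n : ℕ} (hm : 1 ≤ m)
    (hι : StrictMono ι) (h0 : ι ⟨0, hm⟩ = 1) (hlast : ι ⟨m - 1, by omega⟩ = n + m)
    {x y : ℕ → M}
    (hxy : ∀ k (hk : k + 1 ≤ m - 1), ∀ i,
      ι ⟨k, by omega⟩ < i → i < ι ⟨k + 1, by omega⟩ → x (i - (k + 1)) = y i)
    {p : ℕ} (hp1 : 1 ≤ p) (hp : p ≤ n + m + 1) :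
    ∏ k ∈ Icc (p - ghostsBelow ι p) n, x k = ∏ q ∈ Icc p (n + m) \ univ.image ι, y q := by
  induction hp using Nat.decreasingInduction with
  | self =>
    have hall : ghostsBelow ι (n + m + 1) = m := by
      rw [ghostsBelow, filter_true_of_mem, card_univ, Fintype.card_fin]
      intro j _
      have := hι.monotone (show j ≤ ⟨m - 1, by omega⟩ by simp only [Fin.le_def]; omega)
      omega
    rw [hall, Icc_eq_empty (by omega), Icc_eq_empty (by omega), empty_sdiff, prod_empty,
      prod_empty]
  | of_succ p hp ih =>
    rw [← insert_Icc_add_one_left_eq_Icc (show p ≤ n + m by omega)]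
    by_cases hpι : p ∈ univ.image ι
    · obtain ⟨j, -, rfl⟩ := mem_image.1 hpι
      rw [insert_sdiff_of_mem _ hpι, ← ih (by omega), ghostsBelow_apply hι,
        ghostsBelow_apply_add_one hι]
      congr 2
      omega
    · have hne : ∀ j, ι j ≠ p := fun j h => hpι (mem_image.2 ⟨j, mem_univ _, h⟩)
      obtain ⟨k, hk, hg, hlo, hhi⟩ := exists_block hm hι
        (by have := hne ⟨0, hm⟩; omega) (by have := hne ⟨m - 1, by omega⟩; omega) hpι
      have hk_lo := hι.apply_add_le_apply (i := ⟨0, hm⟩) (j := ⟨k, by omega⟩) (Nat.zero_le _)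
      have hk_hi := hι.apply_add_le_apply (i := ⟨k + 1, by omega⟩) (j := ⟨m - 1, by omega⟩)
        (Fin.le_iff_val_le_val.2 (show k + 1 ≤ m - 1 from hk))
      simp only at hk_lo hk_hi
      rw [insert_sdiff_of_notMem _ hpι, prod_insert (by simp), ← ih (by omega),
        ghostsBelow_add_one_of_notMem hpι, hg,
        ← insert_Icc_add_one_left_eq_Icc (show p - (k + 1) ≤ n by omega), prod_insert (by simp),
        hxy k hk p hlo hhi]
      congr 3
      omega

end Ghosts

theorem prod_Icc_sdiff_image {M : Type*} [CommMonoid M] {y : ℕ → M} {m N : ℕ} {ι : Fin m → ℕ} (hm : 1 ≤ m) (hι : StrictMono ι)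
    (hlast : ι ⟨m - 1, by omega⟩ = N) (hy : ∀ q, y q * y q = 1) {p : ℕ} (hp : p ≤ N) :
    ∏ q ∈ Icc p N \ univ.image ι, y q =
      (∏ k ∈ Icc p N, y k) * y N * ∏ j ∈ univ.filter (fun j => p ≤ ι j ∧ ι j < N),
        (∏ k ∈ Icc (ι j) N, y k) * ∏ k ∈ Icc (ι j + 1) N, y k := by
  have hle : ∀ j, ι j ≤ N := fun j =>
    hlast ▸ hι.monotone (show j ≤ ⟨m - 1, by omega⟩ by simp only [Fin.le_def]; omega)
  have hghosts : Icc p N ∩ univ.image ι =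
      insert N ((univ.filter fun j => p ≤ ι j ∧ ι j < N).image ι) := by
    ext q
    simp only [mem_inter, mem_Icc, mem_image, mem_univ, true_and, mem_insert, mem_filter]
    constructor
    · rintro ⟨⟨hpq, hqN⟩, j, rfl⟩
      exact (hqN.lt_or_eq).elim (fun h => Or.inr ⟨j, ⟨hpq, h⟩, rfl⟩) Or.inl
    · rintro (rfl | ⟨j, ⟨hpj, -⟩, rfl⟩)
      exacts [⟨⟨hp, le_rfl⟩, _, hlast⟩, ⟨⟨hpj, hle j⟩, j, rfl⟩]
  rw [prod_sdiff_of_mul_self_eq_one hy, hghosts,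
    prod_insert (by simp +contextual [Nat.ne_of_lt]), mul_assoc, prod_image hι.injective.injOn]
  congr 2
  exact prod_congr rfl fun j _ => eq_prod_Icc_mul_prod_Icc_add_one hy (hle j)

theorem exists_sub_ghostsBelow_eq {m n : ℕ} {ι : Fin m → ℕ} (hm : 1 ≤ m) (hι : StrictMono ι)
    (h0 : ι ⟨0, hm⟩ = 1) (hlast : ι ⟨m - 1, by omega⟩ = n + m) {i : ℕ} (hi : i ∈ Icc 1 n) :
    ∃ p ∈ Icc 2 (n + m), p - ghostsBelow ι p = i := by
  have h2 := ghostsBelow_apply_add_one hι ⟨0, hm⟩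
  have hN := ghostsBelow_apply hι ⟨m - 1, by omega⟩
  rw [h0] at h2
  rw [hlast] at hN
  simp only [mem_Icc] at hi
  refine Nat.exists_mem_Icc_eq_of_le_add_one (fun p => ?_) (by omega)
    (by simp only [h2]; omega) (by simp only [hN]; omega)
  have := ghostsBelow_mono ι (Nat.le_add_right p 1)
  omega

section Polynomial

open MvPolynomial

variable {R : Type*} [CommSemiring R]

/-- The variable `X t` stands for the observable feature `φ (t + 1)`, so `obsVar N s` stands for
`φ s` (junk `0` unless `1 ≤ s ≤ N`). -/
noncomputable def obsVar (N s : ℕ) : MvPolynomial (Fin N) R :=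
  if h : s - 1 < N then X ⟨s - 1, h⟩ else 0

theorem eval_obsVar {N s : ℕ} (f : ℕ → R) (h1 : 1 ≤ s) (h2 : s ≤ N) :
    eval (fun t : Fin N => f (t + 1)) (obsVar N s) = f s := by
  rw [obsVar, dif_pos (by omega), eval_X, Nat.sub_add_cancel h1]

theorem totalDegree_obsVar_le (N s : ℕ) : (obsVar N s : MvPolynomial (Fin N) R).totalDegree ≤ 1 := by
  unfold obsVar
  split_ifs
  exacts [(totalDegree_monomial_le (Finsupp.single _ 1) (1 : R)).trans (by simp), by simp]

noncomputable def hiddenFeaturePoly {m : ℕ} (ι : Fin m → ℕ) (N p : ℕ) : MvPolynomial (Fin N) R :=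
  obsVar N p * obsVar N N *
    ∏ j ∈ univ.filter (fun j => p ≤ ι j ∧ ι j < N), obsVar N (ι j) * obsVar N (ι j + 1)

theorem eval_hiddenFeaturePoly {m N p : ℕ} (ι : Fin m → ℕ) (f : ℕ → R) (hp1 : 1 ≤ p)
    (hpN : p ≤ N) :
    eval (fun t : Fin N => f (t + 1)) (hiddenFeaturePoly ι N p) =
      f p * f N * ∏ j ∈ univ.filter (fun j => p ≤ ι j ∧ ι j < N), f (ι j) * f (ι j + 1) := by
  simp only [hiddenFeaturePoly, map_mul, map_prod]
  rw [eval_obsVar f hp1 hpN, eval_obsVar f (by omega) le_rfl]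
  refine congrArg _ (prod_congr rfl fun j hj => ?_)
  simp only [mem_filter, mem_univ, true_and] at hj
  rw [eval_obsVar f (by omega) hj.2.le, eval_obsVar f (by omega) hj.2]

theorem totalDegree_hiddenFeaturePoly_le {m N p : ℕ} {ι : Fin m → ℕ} (hm : 2 ≤ m)
    (h0 : ι ⟨0, by omega⟩ < p) (hlast : ι ⟨m - 1, by omega⟩ = N) :
    (hiddenFeaturePoly ι N p : MvPolynomial (Fin N) R).totalDegree ≤ 2 * m - 2 := by
  have hcard : #(univ.filter fun j => p ≤ ι j ∧ ι j < N) ≤ m - 2 := by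
    have hsub : univ.filter (fun j => p ≤ ι j ∧ ι j < N) ⊆
        univ \ {⟨0, by omega⟩, ⟨m - 1, by omega⟩} := fun j hj => by
      simp only [mem_filter, mem_univ, true_and, mem_sdiff, mem_insert, mem_singleton] at hj ⊢
      rintro (rfl | rfl) <;> omega
    refine (card_le_card hsub).trans ?_
    rw [card_sdiff, inter_univ, card_pair (by simp [Fin.ext_iff]; omega), card_univ,
      Fintype.card_fin]
  have hprod := (totalDegree_finsetProd _ _).trans (sum_le_sum fun j (_ : j ∈ univ.filter
    (fun j => p ≤ ι j ∧ ι j < N)) => (totalDegree_mul (R := R) (obsVar N (ι j))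
      (obsVar N (ι j + 1))).trans (add_le_add (totalDegree_obsVar_le _ _)
        (totalDegree_obsVar_le _ _)))
  rw [sum_const, smul_eq_mul] at hprod
  refine (totalDegree_mul _ _).trans ?_
  have := (totalDegree_mul (obsVar N p : MvPolynomial (Fin N) R) (obsVar N N)).trans
    (add_le_add (totalDegree_obsVar_le N p) (totalDegree_obsVar_le N N))
  omega

end Polynomial

theorem eval_hiddenFeaturePoly_eq_prod {n m : ℕ} {ι : Fin m → ℕ} (hm : 1 ≤ m)
    (hι : StrictMono ι) (h0 : ι ⟨0, hm⟩ = 1) (hlast : ι ⟨m - 1, by omega⟩ = n + m)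
    {b c : ℕ → ℤ} (hb : ∀ k, b k = 0 ∨ b k = 1) (hc : MPlusBitsInterface n m hm ι b c)
    {p : ℕ} (hp : p ∈ Icc 2 (n + m)) :
    MvPolynomial.eval
        (fun t : Fin (n + m) => ((∏ k ∈ Icc ((t : ℕ) + 1) (n + m), (2 * b k - 1) : ℤ) : ℝ))
        (hiddenFeaturePoly ι (n + m) p) =
      ((∏ k ∈ Icc (p - ghostsBelow ι p) n, (2 * c k - 1) : ℤ) : ℝ) := by
  have hsign : ∀ q, (2 * b q - 1) * (2 * b q - 1) = 1 := fun q => by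
    rcases hb q with h | h <;> simp [h]
  rw [mem_Icc] at hp
  rw [eval_hiddenFeaturePoly ι (fun t => ((∏ k ∈ Icc t (n + m), (2 * b k - 1) : ℤ) : ℝ))
      (by omega) hp.2,
    prod_Icc_sub_ghostsBelow hm hι h0 hlast (x := fun k => 2 * c k - 1)
      (fun k hk j h1 h2 => congrArg (2 * · - 1) (hc.2.1 k hk j h1 h2)) (by omega) (by omega),
    prod_Icc_sdiff_image hm hι hlast hsign hp.2]
  push_cast [Icc_self, prod_singleton]
  rfl

end GhostBits

open GhostBits

/-- Theorem 1, case i₁ = 1 and i_m = n + m: if no two ghost positions are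
consecutive, the argument of the sign function in the APUF response model is,
as a function of the observable feature vector `(φ(1), ..., φ(n+m))`, given by
a multivariate polynomial of total degree at most `2m - 2` (case `i₁ = 1` and `i_m = n + m`). -/
theorem stmt9 (n m : ℕ) (hn : 1 ≤ n) (hm : 1 ≤ m)
    (ι : Fin m → ℕ) (hmono : StrictMono ι)
    (hfirst1 : ι ⟨0, hm⟩ = 1) (hlast1 : ι ⟨m - 1, by omega⟩ = n + m) :
    ∀ (v : ℝ) (w : ℕ → ℝ),
      ∃ p : MvPolynomial (Fin (n + m)) ℝ,
        p.totalDegree ≤ 2 * m - 2 ∧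
        ∀ (b c : ℕ → ℤ), (∀ k, b k = 0 ∨ b k = 1) →
          MPlusBitsInterface n m hm ι b c →
          v + ∑ i ∈ Finset.Icc 1 n,
              w i * ((∏ k ∈ Finset.Icc i n, (2 * c k - 1) : ℤ) : ℝ)
            = MvPolynomial.eval
                (fun t : Fin (n + m) =>
                  ((∏ k ∈ Finset.Icc ((t : ℕ) + 1) (n + m), (2 * b k - 1) : ℤ) : ℝ))
                p := by
  intro v w
  have hm2 : 2 ≤ m := by
    by_contra! h
    have : (⟨0, hm⟩ : Fin m) = ⟨m - 1, by omega⟩ := Fin.ext (by simp only; omega)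
    rw [this, hlast1] at hfirst1
    omega
  choose! pos hpos hpos_sub using
    fun i (hi : i ∈ Icc 1 n) => exists_sub_ghostsBelow_eq hm hmono hfirst1 hlast1 hi
  refine ⟨MvPolynomial.C v + ∑ i ∈ Icc 1 n,
    MvPolynomial.C (w i) * hiddenFeaturePoly ι (n + m) (pos i), ?_, ?_⟩
  · refine (MvPolynomial.totalDegree_add _ _).trans (max_le (by simp) ?_)
    refine (MvPolynomial.totalDegree_finsetSum _ _).trans (Finset.sup_le fun i hi => ?_)
    refine (MvPolynomial.totalDegree_mul _ _).trans ?_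
    rw [MvPolynomial.totalDegree_C, zero_add]
    have := mem_Icc.1 (hpos i hi)
    exact totalDegree_hiddenFeaturePoly_le hm2 (by omega) hlast1
  · intro b c hb hc
    simp only [map_add, map_sum, map_mul, MvPolynomial.eval_C]
    refine congrArg _ (sum_congr rfl fun i hi => ?_)
    rw [eval_hiddenFeaturePoly_eq_prod hm hmono hfirst1 hlast1 hb hc (hpos i hi), hpos_sub i hi]
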